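/- arXiv:2502.20195 — 3 statements merged into one kernel-verified Lean document; each statement's English description precedes it below -/
import Mathlib

section
/- Let Σ be a root system in E with base Δ and let m be a multiplicity function on Σ. Then for every α ∈ Δ there exists a positive integer m_α such that Σ_{β ∈ Σ, ⟨β, w_α⟩ > 0} m(β)·β = m_α · w_α. (This is the paper's Lemma asserting ϱ_{{α}} = (m_α/2)·w_α, in the abstract setting of the restricted root system of a real semisimple Lie algebra with multiplicities m(β) = dim g_β.) -/
open scoped RealInnerProductSpace

variable {E : Type*} [NormedAddCommGroup E] [InnerProductSpace ℝ E] [FiniteDimensional ℝ E]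

/-- The reflection `s_α` along a root `α`, applied to `β`. -/
noncomputable def reflAlong (α β : E) : E := β - (2 * ⟪β, α⟫ / ⟪α, α⟫) • α

/-- `S` is a (possibly non-reduced) root system in `E`. -/
structure IsRootSystem (S : Finset E) : Prop where
  nonzero : ∀ β ∈ S, β ≠ 0
  span_top : Submodule.span ℝ (S : Set E) = ⊤
  refl_mem : ∀ γ ∈ S, ∀ β ∈ S, reflAlong γ β ∈ S
  integral : ∀ γ ∈ S, ∀ β ∈ S, ∃ n : ℤ, 2 * ⟪β, γ⟫ / ⟪γ, γ⟫ = (n : ℝ)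

/-- `Δ` is a base of the root system `S`, with integer coefficient function `c`:
every `β ∈ S` expands as `β = ∑_{α ∈ Δ} c β α • α` with all coefficients `≥ 0`
or all `≤ 0`. -/
structure IsBase (S Δ : Finset E) (c : E → E → ℤ) : Prop where
  subset : Δ ⊆ S
  indep : LinearIndependent ℝ (fun a : Δ => (a : E))
  expand : ∀ β ∈ S, β = ∑ a ∈ Δ, (c β a : ℝ) • a
  sign : ∀ β ∈ S, (∀ a ∈ Δ, 0 ≤ c β a) ∨ (∀ a ∈ Δ, c β a ≤ 0)

/-- `w` is the fundamental weight associated to the simple root `α ∈ Δ`. -/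
def IsFundWeight (Δ : Finset E) (α w : E) : Prop :=
  ⟪w, α⟫ = ⟪α, α⟫ / 2 ∧ ∀ α' ∈ Δ, α' ≠ α → ⟪w, α'⟫ = 0

/-- `m` is a multiplicity function on the root system `S`: it takes values `≥ 1` on `S`
and is invariant under all root reflections. -/
def IsMult (S : Finset E) (m : E → ℕ) : Prop :=
  (∀ β ∈ S, 1 ≤ m β) ∧ ∀ β ∈ S, ∀ γ ∈ S, m (reflAlong γ β) = m β

private lemma aux_inner_self_pos {x : E} (h : x ≠ 0) : (0:ℝ) < ⟪x, x⟫ :=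
  lt_of_le_of_ne real_inner_self_nonneg (Ne.symm (inner_self_ne_zero.mpr h))

/-- For every simple root `α ∈ Δ` there is a positive integer `m_α`
such that `∑_{β ∈ Σ, ⟨β, w_α⟩ > 0} m(β) • β = m_α • w_α`. -/
theorem sum_roots_positive_pairing_eq_nsmul_fundWeight
    (S Δ : Finset E) (c : E → E → ℤ) (m : E → ℕ) (α w : E)
    (hS : IsRootSystem S) (hΔ : IsBase S Δ c) (hm : IsMult S m)
    (hα : α ∈ Δ) (hw : IsFundWeight Δ α w) :
    ∃ mα : ℕ, 0 < mα ∧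
      ∑ β ∈ S.filter (fun β => 0 < ⟪β, w⟫), (m β : ℝ) • β = (mα : ℝ) • w := by
  classical
  obtain ⟨hw1, hw2⟩ := hw
  have hαS : α ∈ S := hΔ.subset hα
  have hα0 : α ≠ 0 := hS.nonzero α hαS
  have hαα : (0:ℝ) < ⟪α, α⟫ := aux_inner_self_pos hα0
  have hw0 : w ≠ 0 := by
    intro h
    rw [h, inner_zero_left] at hw1
    linarith
  have hww : (0:ℝ) < ⟪w, w⟫ := aux_inner_self_pos hw0
  set T := S.filter (fun β => 0 < ⟪β, w⟫) with hT
  have hTS : ∀ β ∈ T, β ∈ S := fun β hβ => (Finset.mem_filter.mp hβ).1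
  have hTpos : ∀ β ∈ T, 0 < ⟪β, w⟫ := fun β hβ => (Finset.mem_filter.mp hβ).2
  have hαT : α ∈ T := by
    rw [hT, Finset.mem_filter]
    refine ⟨hαS, ?_⟩
    rw [real_inner_comm, hw1]; linarith
  set ϱ := ∑ β ∈ T, (m β : ℝ) • β with hϱ
  have hϱinner : ∀ x : E, ⟪ϱ, x⟫ = ∑ β ∈ T, (m β : ℝ) * ⟪β, x⟫ := by
    intro x
    rw [hϱ, sum_inner]
    exact Finset.sum_congr rfl fun β _ => real_inner_smul_left β x (m β)
  -- reflection basic facts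
  have hrefl_inner : ∀ γ : E, γ ≠ 0 → ∀ β : E, ⟪reflAlong γ β, γ⟫ = -⟪β, γ⟫ := by
    intro γ hγ β
    have hγγ : ⟪γ, γ⟫ ≠ (0:ℝ) := ne_of_gt (aux_inner_self_pos hγ)
    rw [reflAlong, inner_sub_left, real_inner_smul_left]
    field_simp
    ring
  have hrefl_invol : ∀ γ : E, γ ≠ 0 → ∀ β : E, reflAlong γ (reflAlong γ β) = β := by
    intro γ hγ β
    have hγγ : ⟪γ, γ⟫ ≠ (0:ℝ) := ne_of_gt (aux_inner_self_pos hγ)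
    rw [reflAlong, hrefl_inner γ hγ β, reflAlong]
    have h2 : (2 * -⟪β, γ⟫ / ⟪γ, γ⟫) = -(2 * ⟪β, γ⟫ / ⟪γ, γ⟫) := by ring
    rw [h2, neg_smul, sub_neg_eq_add, sub_add_cancel]
  -- orthogonality of ϱ to simple roots other than α
  have hortho : ∀ a ∈ Δ, a ≠ α → ⟪ϱ, a⟫ = 0 := by
    intro γ hγΔ hγα
    have hγS : γ ∈ S := hΔ.subset hγΔ
    have hγ0 : γ ≠ 0 := hS.nonzero γ hγS
    have hγγ : ⟪γ, γ⟫ ≠ (0:ℝ) := ne_of_gt (aux_inner_self_pos hγ0)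
    have hγw : ⟪γ, w⟫ = 0 := by rw [real_inner_comm]; exact hw2 γ hγΔ hγα
    rw [hϱinner]
    refine Finset.sum_involution (fun β _ => reflAlong γ β) ?_ ?_ ?_ ?_
    · intro β hβ
      have hm' : m (reflAlong γ β) = m β := hm.2 β (hTS β hβ) γ hγS
      show (m β : ℝ) * ⟪β, γ⟫ + (m (reflAlong γ β) : ℝ) * ⟪reflAlong γ β, γ⟫ = 0
      rw [hm', hrefl_inner γ hγ0 β]; ring
    · intro β hβ hne
      have hβγ : ⟪β, γ⟫ ≠ (0:ℝ) := by
        intro h; apply hne; rw [h]; ring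
      show reflAlong γ β ≠ β
      rw [reflAlong]
      intro h
      rcases smul_eq_zero.mp (sub_eq_self.mp h) with h1 | h1
      · rcases div_eq_zero_iff.mp h1 with h2 | h2
        · exact hβγ (by linarith)
        · exact hγγ h2
      · exact hγ0 h1
    · intro β hβ
      show reflAlong γ β ∈ T
      rw [hT, Finset.mem_filter]
      refine ⟨hS.refl_mem γ hγS β (hTS β hβ), ?_⟩
      rw [reflAlong, inner_sub_left, real_inner_smul_left, hγw]
      simpa using hTpos β hβ
    · intro β hβ
      exact hrefl_invol γ hγ0 β
  -- span of Δ is everything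
  have hspanΔ : Submodule.span ℝ (↑Δ : Set E) = ⊤ := by
    rw [eq_top_iff, ← hS.span_top, Submodule.span_le]
    intro β hβ
    have hβS : β ∈ S := Finset.mem_coe.mp hβ
    rw [SetLike.mem_coe, hΔ.expand β hβS]
    exact Submodule.sum_mem _ fun a ha =>
      Submodule.smul_mem _ _ (Submodule.subset_span ha)
  -- ϱ is a multiple of w
  set t := 2 * ⟪ϱ, α⟫ / ⟪α, α⟫ with ht
  have hϱw : ϱ = t • w := by
    have hkey : ∀ a ∈ Δ, ⟪ϱ - t • w, a⟫ = 0 := by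
      intro a haΔ
      rw [inner_sub_left, real_inner_smul_left]
      by_cases haα : a = α
      · subst haα
        rw [hw1, ht]
        field_simp
        ring
      · rw [hortho a haΔ haα, hw2 a haΔ haα]; ring
    have hzero : ∀ x : E, ⟪ϱ - t • w, x⟫ = 0 := by
      intro x
      have hx : x ∈ Submodule.span ℝ (↑Δ : Set E) := by rw [hspanΔ]; trivial
      refine Submodule.span_induction ?_ ?_ ?_ ?_ hx
      · intro y hy; exact hkey y hy
      · exact inner_zero_right _
      · intro y z _ _ hy hz; rw [inner_add_right, hy, hz]; ring
      · intro r y _ hy; rw [real_inner_smul_right, hy]; ring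
    have h0 : ϱ - t • w = 0 := inner_self_eq_zero.mp (hzero (ϱ - t • w))
    exact sub_eq_zero.mp h0
  -- t is a positive integer
  set g : E → ℤ :=
    (fun β => if h : β ∈ S then Classical.choose (hS.integral α hαS β h) else 0) with hgdef
  have hg : ∀ β ∈ S, 2 * ⟪β, α⟫ / ⟪α, α⟫ = (g β : ℝ) := by
    intro β h
    rw [hgdef]
    simp only [dif_pos h]
    exact Classical.choose_spec (hS.integral α hαS β h)
  have ht2 : t = ∑ β ∈ T, (m β : ℝ) * (2 * ⟪β, α⟫ / ⟪α, α⟫) := by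
    rw [ht, hϱinner, Finset.mul_sum, Finset.sum_div]
    exact Finset.sum_congr rfl fun β _ => by ring
  set N : ℤ := ∑ β ∈ T, (m β : ℤ) * g β with hN
  have htN : t = (N : ℝ) := by
    rw [ht2, hN]
    push_cast
    exact Finset.sum_congr rfl fun β hβ => by rw [hg β (hTS β hβ)]
  have hϱwpos : 0 < ⟪ϱ, w⟫ := by
    rw [hϱinner]
    refine Finset.sum_pos (fun β hβ => mul_pos ?_ (hTpos β hβ)) ⟨α, hαT⟩
    exact_mod_cast hm.1 β (hTS β hβ)
  have htpos : 0 < t := by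
    have h1 : ⟪ϱ, w⟫ = t * ⟪w, w⟫ := by rw [hϱw, real_inner_smul_left]
    nlinarith
  have hNpos : 0 < N := by
    rw [htN] at htpos
    exact_mod_cast htpos
  refine ⟨N.toNat, by omega, ?_⟩
  rw [hϱw]
  congr 1
  rw [htN]
  exact_mod_cast (Int.toNat_of_nonneg hNpos.le).symm
end

section
/- Let Σ be a root system in E with base Δ, let m be a multiplicity function on Σ, and let Θ ⊆ Δ be nonempty. Set Σ_Θ^+ := {β ∈ Σ⁺ : c_α(β) > 0 for some α ∈ Θ} and ϱ_Θ := ½ Σ_{β ∈ Σ_Θ^+} m(β)·β, and write ϱ_{{α}} for this element when Θ = {α}. Then there exist positive rational numbers (r_α)_{α∈Θ} such that p_Θ(ϱ_Θ) = Σ_{α∈Θ} r_α · ϱ_{{α}}. (This is the abstract content of the paper's Lemma expressing the Jacobian class function of a flag manifold as a positive rational combination of those of the dominated simple flag manifolds.) -/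
open scoped RealInnerProductSpace

variable {E : Type*} [NormedAddCommGroup E] [InnerProductSpace ℝ E] [FiniteDimensional ℝ E]

/-- The subspace `a_Θ = {X ∈ E : ⟨α', X⟩ = 0 for all α' ∈ Δ∖Θ}`. -/
noncomputable def aTheta (Δ Θ : Finset E) : Submodule ℝ E :=
  ⨅ α' ∈ ((Δ : Set E) \ (Θ : Set E)), (Submodule.span ℝ {α'})ᗮ

/-- The half-sum `ϱ_Θ = ½ ∑_{β ∈ Σ_Θ^+} m(β) • β`, where
`Σ_Θ^+ = {β ∈ Σ⁺ : c_α(β) > 0 for some α ∈ Θ}`. -/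
noncomputable def rhoTheta (S Δ Θ : Finset E) (c : E → E → ℤ) (m : E → ℕ) : E :=
  (2 : ℝ)⁻¹ • ∑ β ∈ S.filter (fun β => (∀ γ ∈ Δ, 0 ≤ c β γ) ∧ ∃ α ∈ Θ, 0 < c β α),
    (m β : ℝ) • β

set_option linter.unusedSectionVars false
set_option linter.unusedVariables false


lemma reflAlong_inner {a : E} (ha : ⟪a, a⟫ ≠ 0) (β : E) :
    ⟪reflAlong a β, a⟫ = -⟪β, a⟫ := by
  rw [reflAlong, inner_sub_left, real_inner_smul_left, div_mul_cancel₀ _ ha]; ring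

lemma reflAlong_invol {a : E} (ha : ⟪a, a⟫ ≠ 0) (β : E) :
    reflAlong a (reflAlong a β) = β := by
  simp only [reflAlong]
  rw [inner_sub_left, real_inner_smul_left, div_mul_cancel₀ _ ha]
  have h2 : 2 * (⟪β, a⟫ - 2 * ⟪β, a⟫) / ⟪a, a⟫ = -(2 * ⟪β, a⟫ / ⟪a, a⟫) := by ring
  rw [h2, neg_smul]
  abel

lemma coord_unique {S Δ : Finset E} {c : E → E → ℤ} (hΔ : IsBase S Δ c)
    {f g : E → ℝ} (h : ∑ a ∈ Δ, f a • a = ∑ a ∈ Δ, g a • a) :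
    ∀ a ∈ Δ, f a = g a := by
  intro a ha
  have hz : ∑ x : Δ, (f (x : E) - g (x : E)) • (x : E) = 0 := by
    have h1 : ∑ x : Δ, f (x : E) • (x : E) = ∑ a ∈ Δ, f a • a := Finset.sum_coe_sort Δ (fun a => f a • a)
    have h2 : ∑ x : Δ, g (x : E) • (x : E) = ∑ a ∈ Δ, g a • a := Finset.sum_coe_sort Δ (fun a => g a • a)
    simp only [sub_smul, Finset.sum_sub_distrib, h1, h2, h, sub_self]
  have := Fintype.linearIndependent_iff.mp hΔ.indep (fun x => f (x : E) - g (x : E)) hz ⟨a, ha⟩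
  exact sub_eq_zero.mp this

section
variable [DecidableEq E]

lemma refl_coord {S Δ : Finset E} {c : E → E → ℤ} (hS : IsRootSystem S)
    (hΔ : IsBase S Δ c) {a : E} (haΔ : a ∈ Δ) {β : E} (hβ : β ∈ S) :
    ∀ b ∈ Δ, (c (reflAlong a β) b : ℝ)
      = (c β b : ℝ) - (if b = a then 2 * ⟪β, a⟫ / ⟪a, a⟫ else 0) := by
  have haS := hΔ.subset haΔ
  have hmem := hS.refl_mem a haS β hβ
  apply coord_unique hΔ
  rw [← hΔ.expand _ hmem]
  have h2 : ∑ b ∈ Δ, ((c β b : ℝ) - (if b = a then 2 * ⟪β, a⟫ / ⟪a, a⟫ else 0)) • b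
      = (∑ b ∈ Δ, (c β b : ℝ) • b)
        - ∑ b ∈ Δ, (if b = a then (2 * ⟪β, a⟫ / ⟪a, a⟫) • b else 0) := by
    rw [← Finset.sum_sub_distrib]
    refine Finset.sum_congr rfl fun b _ => ?_
    split <;> simp [sub_smul]
  rw [h2, Finset.sum_ite_eq' Δ a (fun b => (2 * ⟪β, a⟫ / ⟪a, a⟫) • b), if_pos haΔ,
    ← hΔ.expand β hβ, reflAlong]

lemma refl_pos {S Δ : Finset E} {c : E → E → ℤ} (hS : IsRootSystem S)
    (hΔ : IsBase S Δ c) {a : E} (haΔ : a ∈ Δ) {β : E} (hβ : β ∈ S)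
    (hnn : ∀ γ ∈ Δ, 0 ≤ c β γ) {b : E} (hbΔ : b ∈ Δ) (hba : b ≠ a) (hb : 0 < c β b) :
    reflAlong a β ∈ S ∧ (∀ γ ∈ Δ, 0 ≤ c (reflAlong a β) γ)
      ∧ ∀ γ ∈ Δ, γ ≠ a → c (reflAlong a β) γ = c β γ := by
  have hmem := hS.refl_mem a (hΔ.subset haΔ) β hβ
  have hcoord := refl_coord hS hΔ haΔ hβ
  have heq : ∀ γ ∈ Δ, γ ≠ a → c (reflAlong a β) γ = c β γ := by
    intro γ hγ hγa
    have h := hcoord γ hγ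
    rw [if_neg hγa, sub_zero] at h
    exact_mod_cast h
  refine ⟨hmem, ?_, heq⟩
  rcases hΔ.sign _ hmem with h | h
  · exact h
  · exfalso
    have h1 := h b hbΔ
    rw [heq b hbΔ hba] at h1
    omega

lemma sum_refl_zero {T : Finset E} {m : E → ℕ} {a : E} (ha : ⟪a, a⟫ ≠ 0)
    (hmap : ∀ β ∈ T, reflAlong a β ∈ T)
    (hminv : ∀ β ∈ T, m (reflAlong a β) = m β) :
    ∑ β ∈ T, (m β : ℝ) * ⟪β, a⟫ = 0 := by
  have key : ∑ β ∈ T, (m β : ℝ) * ⟪β, a⟫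
      = ∑ β ∈ T, (m (reflAlong a β) : ℝ) * ⟪reflAlong a β, a⟫ := by
    refine Finset.sum_nbij' (fun β => reflAlong a β) (fun β => reflAlong a β)
      hmap hmap (fun β _ => reflAlong_invol ha β) (fun β _ => reflAlong_invol ha β) ?_
    intro β hβ
    rw [reflAlong_invol ha]
  have key2 : ∀ β ∈ T, (m (reflAlong a β) : ℝ) * ⟪reflAlong a β, a⟫
      = -((m β : ℝ) * ⟪β, a⟫) := by
    intro β hβ
    rw [hminv β hβ, reflAlong_inner ha]
    ring
  rw [Finset.sum_congr rfl key2, Finset.sum_neg_distrib] at key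
  linarith

open Classical in
noncomputable def nInt (β γ : E) : ℤ :=
  if h : ∃ n : ℤ, 2 * ⟪β, γ⟫ / ⟪γ, γ⟫ = (n : ℝ) then h.choose else 0

lemma inner_eq_nInt {S : Finset E} (hS : IsRootSystem S) {β γ : E}
    (hβ : β ∈ S) (hγ : γ ∈ S) :
    ⟪β, γ⟫ = (nInt β γ : ℝ) * ⟪γ, γ⟫ / 2 := by
  have h := hS.integral γ hγ β hβ
  have hne : ⟪γ, γ⟫ ≠ 0 := inner_self_ne_zero.mpr (hS.nonzero γ hγ)
  have hspec : 2 * ⟪β, γ⟫ / ⟪γ, γ⟫ = (nInt β γ : ℝ) := by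
    classical
    rw [nInt]
    rw [dif_pos h]
    exact h.choose_spec
  field_simp at hspec
  linarith

noncomputable def qval (S Δ Θ : Finset E) (c : E → E → ℤ) (m : E → ℕ) (a : E) : ℚ :=
  ∑ β ∈ S.filter (fun β => (∀ γ ∈ Δ, 0 ≤ c β γ) ∧ ∃ α ∈ Θ, 0 < c β α),
    (m β : ℚ) * (nInt β a : ℚ)

lemma inner_rho (S Δ Θ : Finset E) (c : E → E → ℤ) (m : E → ℕ) (a : E) :
    ⟪rhoTheta S Δ Θ c m, a⟫
      = 2⁻¹ * ∑ β ∈ S.filter (fun β => (∀ γ ∈ Δ, 0 ≤ c β γ) ∧ ∃ α ∈ Θ, 0 < c β α),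
          (m β : ℝ) * ⟪β, a⟫ := by
  rw [rhoTheta, real_inner_smul_left, sum_inner]
  congr 1
  exact Finset.sum_congr rfl fun β _ => real_inner_smul_left _ _ _

lemma inner_rho_eq_qval {S Δ : Finset E} (Θ : Finset E) {c : E → E → ℤ} (m : E → ℕ)
    (hS : IsRootSystem S) {a : E} (haS : a ∈ S) :
    ⟪rhoTheta S Δ Θ c m, a⟫ = (qval S Δ Θ c m a : ℝ) * (⟪a, a⟫ / 4) := by
  rw [inner_rho, qval]
  have h : ∀ β ∈ S.filter (fun β => (∀ γ ∈ Δ, 0 ≤ c β γ) ∧ ∃ α ∈ Θ, 0 < c β α),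
      (m β : ℝ) * ⟪β, a⟫ = ((m β : ℝ) * (nInt β a : ℝ)) * (⟪a, a⟫ / 2) := by
    intro β hβ
    rw [inner_eq_nInt hS (Finset.mem_filter.mp hβ).1 haS]
    ring
  rw [Finset.sum_congr rfl h, ← Finset.sum_mul]
  push_cast
  ring

lemma rho_inner_eq_zero {S Δ Θ : Finset E} {c : E → E → ℤ} {m : E → ℕ}
    (hS : IsRootSystem S) (hΔ : IsBase S Δ c) (hm : IsMult S m) (hΘ : Θ ⊆ Δ)
    {a : E} (haΔ : a ∈ Δ) (haΘ : a ∉ Θ) :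
    ⟪rhoTheta S Δ Θ c m, a⟫ = 0 := by
  have haS := hΔ.subset haΔ
  have haa : ⟪a, a⟫ ≠ 0 := inner_self_ne_zero.mpr (hS.nonzero a haS)
  rw [inner_rho, sum_refl_zero haa ?hmap ?hminv, mul_zero]
  case hmap =>
    intro β hβ
    simp only [Finset.mem_filter] at hβ ⊢
    obtain ⟨hβS, hnn, α, hαΘ, hα⟩ := hβ
    have hαa : α ≠ a := fun h => haΘ (h ▸ hαΘ)
    obtain ⟨hmem, hnn2, heq⟩ := refl_pos hS hΔ haΔ hβS hnn (hΘ hαΘ) hαa hα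
    exact ⟨hmem, hnn2, α, hαΘ, by rw [heq α (hΘ hαΘ) hαa]; exact hα⟩
  case hminv =>
    intro β hβ
    exact hm.2 β (Finset.mem_filter.mp hβ).1 a haS

lemma coord_base {S Δ : Finset E} {c : E → E → ℤ} (hΔ : IsBase S Δ c)
    {a : E} (haΔ : a ∈ Δ) :
    ∀ γ ∈ Δ, (c a γ : ℝ) = if γ = a then 1 else 0 := by
  apply coord_unique hΔ
  rw [← hΔ.expand a (hΔ.subset haΔ)]
  have h : ∀ γ ∈ Δ, (if γ = a then (1 : ℝ) else 0) • γ
      = if γ = a then γ else 0 := by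
    intro γ _
    split <;> simp
  rw [Finset.sum_congr rfl h, Finset.sum_ite_eq' Δ a (fun γ => γ), if_pos haΔ]

lemma rho_inner_pos {S Δ Θ : Finset E} {c : E → E → ℤ} {m : E → ℕ}
    (hS : IsRootSystem S) (hΔ : IsBase S Δ c) (hm : IsMult S m) (hΘ : Θ ⊆ Δ)
    {a : E} (haΘ : a ∈ Θ) :
    0 < ⟪rhoTheta S Δ Θ c m, a⟫ := by
  have haΔ := hΘ haΘ
  have haS := hΔ.subset haΔ
  have haa0 : ⟪a, a⟫ ≠ 0 := inner_self_ne_zero.mpr (hS.nonzero a haS)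
  have haa : 0 < ⟪a, a⟫ :=
    lt_of_le_of_ne real_inner_self_nonneg (fun h => haa0 h.symm)
  rw [inner_rho]
  set f : E → ℝ := fun β => (m β : ℝ) * ⟪β, a⟫ with hf
  set TΘ := S.filter (fun β => (∀ γ ∈ Δ, 0 ≤ c β γ) ∧ ∃ α ∈ Θ, 0 < c β α) with hTΘ
  set TΔ := S.filter (fun β => (∀ γ ∈ Δ, 0 ≤ c β γ) ∧ ∃ α ∈ Δ, 0 < c β α) with hTΔ
  have hsub : TΘ ⊆ TΔ := by
    intro β hβ
    simp only [hTΘ, hTΔ, Finset.mem_filter] at hβ ⊢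
    obtain ⟨hβS, hnn, α, hαΘ, hα⟩ := hβ
    exact ⟨hβS, hnn, α, hΘ hαΘ, hα⟩
  -- the difference part is nonpositive
  have hdiff : ∑ β ∈ TΔ \ TΘ, f β ≤ 0 := by
    apply Finset.sum_nonpos
    intro β hβ
    rw [Finset.mem_sdiff] at hβ
    obtain ⟨hβΔ, hβΘ⟩ := hβ
    simp only [hTΔ, Finset.mem_filter] at hβΔ
    obtain ⟨hβS, hnn, b, hbΔ, hb⟩ := hβΔ
    have hzero : ∀ α ∈ Θ, c β α = 0 := by
      intro α hα
      by_contra hc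
      have h1 : 0 < c β α := lt_of_le_of_ne (hnn α (hΘ hα)) (Ne.symm hc)
      exact hβΘ (by simp only [hTΘ, Finset.mem_filter]; exact ⟨hβS, hnn, α, hα, h1⟩)
    have hba : b ≠ a := by
      intro h
      rw [h] at hb
      rw [hzero a haΘ] at hb
      exact lt_irrefl 0 hb
    obtain ⟨hmem, hnn2, _⟩ := refl_pos hS hΔ haΔ hβS hnn hbΔ hba hb
    have hca := refl_coord hS hΔ haΔ hβS a haΔ
    rw [if_pos rfl, hzero a haΘ] at hca
    have h2 : (0 : ℝ) ≤ c (reflAlong a β) a := by exact_mod_cast hnn2 a haΔ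
    rw [hca] at h2
    have h3 : ⟪β, a⟫ ≤ 0 := by
      by_contra h4
      push_neg at h4
      have : 0 < 2 * ⟪β, a⟫ / ⟪a, a⟫ := by positivity
      simp only [Int.cast_zero, zero_sub] at h2
      linarith
    have h5 : (0 : ℝ) ≤ (m β : ℝ) := Nat.cast_nonneg _
    exact mul_nonpos_of_nonneg_of_nonpos h5 h3
  -- the full sum is positive
  have hfull : 0 < ∑ β ∈ TΔ, f β := by
    rw [← Finset.sum_filter_add_sum_filter_not TΔ (fun β => ∀ b ∈ Δ, b ≠ a → c β b = 0) f]
    have hU : ∑ β ∈ TΔ.filter (fun β => ¬ ∀ b ∈ Δ, b ≠ a → c β b = 0), f β = 0 := by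
      apply sum_refl_zero haa0
      · intro β hβ
        simp only [Finset.mem_filter, hTΔ] at hβ ⊢
        obtain ⟨⟨hβS, hnn, _⟩, hnp⟩ := hβ
        push_neg at hnp
        obtain ⟨b, hbΔ, hba, hb0⟩ := hnp
        have hb : 0 < c β b := lt_of_le_of_ne (hnn b hbΔ) (Ne.symm hb0)
        obtain ⟨hmem, hnn2, heq⟩ := refl_pos hS hΔ haΔ hβS hnn hbΔ hba hb
        refine ⟨⟨hmem, hnn2, b, hbΔ, by rw [heq b hbΔ hba]; exact hb⟩, ?_⟩
        push_neg
        exact ⟨b, hbΔ, hba, by rw [heq b hbΔ hba]; omega⟩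
      · intro β hβ
        simp only [Finset.mem_filter, hTΔ] at hβ
        exact hm.2 β hβ.1.1 a haS
    rw [hU, add_zero]
    apply Finset.sum_pos
    · intro β hβ
      simp only [Finset.mem_filter, hTΔ] at hβ
      obtain ⟨⟨hβS, hnn, α, hαΔ, hα⟩, hz⟩ := hβ
      have hca : 0 < c β a := by
        by_cases h : α = a
        · rwa [h] at hα
        · rw [hz α hαΔ h] at hα; omega
      have hβa : β = (c β a : ℝ) • a := by
        conv_lhs => rw [hΔ.expand β hβS]
        rw [Finset.sum_eq_single_of_mem a haΔ
          (fun b hbΔ hba => by rw [hz b hbΔ hba]; simp)]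
      have hβia : ⟪β, a⟫ = (c β a : ℝ) * ⟪a, a⟫ := by
        conv_lhs => rw [hβa]
        rw [real_inner_smul_left]
      have hmβ : 0 < (m β : ℝ) := by
        have := hm.1 β hβS
        positivity
      rw [hf]
      simp only []
      rw [hβia]
      have : (0:ℝ) < (c β a : ℝ) := by exact_mod_cast hca
      positivity
    · refine ⟨a, ?_⟩
      simp only [Finset.mem_filter, hTΔ]
      have hcb := coord_base hΔ haΔ
      have hnn : ∀ γ ∈ Δ, 0 ≤ c a γ := by
        intro γ hγ
        have h := hcb γ hγ
        by_cases hq : γ = a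
        · rw [if_pos hq] at h
          have h2 : c a γ = 1 := by exact_mod_cast h
          omega
        · rw [if_neg hq] at h
          have h2 : c a γ = 0 := by exact_mod_cast h
          omega
      have hcaa : 0 < c a a := by
        have h := hcb a haΔ
        rw [if_pos rfl] at h
        have h2 : c a a = 1 := by exact_mod_cast h
        omega
      refine ⟨⟨haS, hnn, a, haΔ, hcaa⟩, ?_⟩
      intro b hbΔ hba
      have := hcb b hbΔ
      rw [if_neg hba] at this
      exact_mod_cast this
  have hsdiff := Finset.sum_sdiff hsub (f := f)
  have : 0 < ∑ β ∈ TΘ, f β := by linarith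
  linarith

end

/-- For nonempty `Θ ⊆ Δ`, there are positive rationals `(r_α)_{α∈Θ}` with
`p_Θ(ϱ_Θ) = ∑_{α ∈ Θ} r_α • ϱ_{{α}}`. -/
theorem proj_rhoTheta_eq_pos_rat_combination
    (S Δ Θ : Finset E) (c : E → E → ℤ) (m : E → ℕ)
    (hS : IsRootSystem S) (hΔ : IsBase S Δ c) (hm : IsMult S m)
    (hΘ : Θ ⊆ Δ) (hne : Θ.Nonempty) :
    ∃ r : E → ℚ, (∀ α ∈ Θ, 0 < r α) ∧
      (Submodule.orthogonalProjection (aTheta Δ Θ) (rhoTheta S Δ Θ c m) : E)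
        = ∑ α ∈ Θ, (r α : ℝ) • rhoTheta S Δ {α} c m := by
  classical
  have hΔS := hΔ.subset
  have qpos : ∀ Θ' : Finset E, Θ' ⊆ Δ → ∀ α ∈ Θ', (0:ℚ) < qval S Δ Θ' c m α := by
    intro Θ' hΘ' α hα
    have haS : α ∈ S := hΔS (hΘ' hα)
    have h1 := rho_inner_pos hS hΔ hm hΘ' hα
    rw [inner_rho_eq_qval Θ' m hS haS] at h1
    have haa : 0 < ⟪α, α⟫ := lt_of_le_of_ne real_inner_self_nonneg
      (fun h => inner_self_ne_zero.mpr (hS.nonzero α haS) h.symm)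
    have h2 : (0:ℝ) < (qval S Δ Θ' c m α : ℝ) := by
      by_contra hq
      push_neg at hq
      nlinarith
    exact_mod_cast h2
  have hsingsub : ∀ α ∈ Θ, ({α} : Finset E) ⊆ Δ :=
    fun α hα => Finset.singleton_subset_iff.mpr (hΘ hα)
  set r : E → ℚ := fun α => qval S Δ Θ c m α / qval S Δ {α} c m α with hr
  refine ⟨r, fun α hα => div_pos (qpos Θ hΘ α hα)
    (qpos {α} (hsingsub α hα) α (Finset.mem_singleton_self α)), ?_⟩
  have hmemA : rhoTheta S Δ Θ c m ∈ aTheta Δ Θ := by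
    rw [aTheta]
    simp only [Submodule.mem_iInf]
    intro α' hα'
    obtain ⟨hα'Δ, hα'Θ⟩ := hα'
    rw [Submodule.mem_orthogonal_singleton_iff_inner_left]
    exact rho_inner_eq_zero hS hΔ hm hΘ (Finset.mem_coe.mp hα'Δ)
      (fun h => hα'Θ (Finset.mem_coe.mpr h))
  rw [← Submodule.starProjection_apply, Submodule.starProjection_eq_self_iff.mpr hmemA]
  have hspanΔ : Submodule.span ℝ (Δ : Set E) = ⊤ := by
    rw [eq_top_iff, ← hS.span_top, Submodule.span_le]
    intro β hβ
    rw [SetLike.mem_coe, hΔ.expand β (Finset.mem_coe.mp hβ)]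
    exact Submodule.sum_mem _
      (fun a ha => Submodule.smul_mem _ _ (Submodule.subset_span (Finset.mem_coe.mpr ha)))
  have hΔinner : ∀ a ∈ Δ, ⟪rhoTheta S Δ Θ c m, a⟫
      = ⟪∑ α ∈ Θ, (r α : ℝ) • rhoTheta S Δ {α} c m, a⟫ := by
    intro a haΔ
    rw [sum_inner]
    by_cases haΘ : a ∈ Θ
    · rw [Finset.sum_eq_single_of_mem a haΘ (fun α hα hαa => by
        rw [real_inner_smul_left,
          rho_inner_eq_zero hS hΔ hm (hsingsub α hα) haΔ
            (fun h => hαa (Finset.mem_singleton.mp h).symm), mul_zero])]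
      rw [real_inner_smul_left, inner_rho_eq_qval Θ m hS (hΔS haΔ),
        inner_rho_eq_qval {a} m hS (hΔS haΔ)]
      have hq0 : (qval S Δ {a} c m a : ℝ) ≠ 0 := by
        exact_mod_cast ne_of_gt (qpos {a} (hsingsub a haΘ) a (Finset.mem_singleton_self a))
      rw [hr]
      push_cast
      field_simp
    · rw [rho_inner_eq_zero hS hΔ hm hΘ haΔ haΘ]
      symm
      apply Finset.sum_eq_zero
      intro α hα
      rw [real_inner_smul_left,
        rho_inner_eq_zero hS hΔ hm (hsingsub α hα) haΔ
          (fun h => haΘ ((Finset.mem_singleton.mp h) ▸ hα)), mul_zero]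
  refine ext_inner_right ℝ ?_
  intro v
  have hv : v ∈ Submodule.span ℝ (Δ : Set E) := by rw [hspanΔ]; exact Submodule.mem_top
  induction hv using Submodule.span_induction with
  | mem z hz => exact hΔinner z (Finset.mem_coe.mp hz)
  | zero => simp
  | add x y hx hy ihx ihy => rw [inner_add_right, inner_add_right, ihx, ihy]
  | smul t x hx ih => rw [real_inner_smul_right, real_inner_smul_right, ih]
end

section
/- Let Σ be a root system in E with base Δ and let Θ ⊆ Δ be nonempty. Then the orthogonal projections {p_Θ(α) : α ∈ Θ} form a basis of a_Θ; consequently there exists a unique vector Y_Θ ∈ a_Θ with ⟨α, Y_Θ⟩ = 1 for all α ∈ Θ. -/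
open scoped RealInnerProductSpace

variable {E : Type*} [NormedAddCommGroup E] [InnerProductSpace ℝ E] [FiniteDimensional ℝ E]

private lemma mem_orthogonal_span_iff' (s : Set E) (x : E) :
    x ∈ (Submodule.span ℝ s)ᗮ ↔ ∀ u ∈ s, ⟪u, x⟫ = 0 := by
  rw [Submodule.mem_orthogonal]
  constructor
  · intro h u hu; exact h u (Submodule.subset_span hu)
  · intro h u hu
    induction hu using Submodule.span_induction with
    | mem v hv => exact h v hv
    | zero => simp
    | add v w _ _ hv hw => rw [inner_add_left, hv, hw, add_zero]
    | smul r v _ hv => rw [real_inner_smul_left, hv, mul_zero]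

private lemma mem_aTheta_iff {Δ Θ : Finset E} {x : E} :
    x ∈ aTheta Δ Θ ↔ ∀ b ∈ (Δ : Set E) \ (Θ : Set E), ⟪b, x⟫ = 0 := by
  simp only [aTheta, Submodule.mem_iInf,
    Submodule.mem_orthogonal_singleton_iff_inner_right]

private lemma aTheta_eq (Δ Θ : Finset E) :
    aTheta Δ Θ = (Submodule.span ℝ ((Δ : Set E) \ (Θ : Set E)))ᗮ := by
  ext x; rw [mem_aTheta_iff, mem_orthogonal_span_iff']

/-- For nonempty `Θ ⊆ Δ`, the orthogonal projections `{p_Θ(α) : α ∈ Θ}`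
form a basis of `a_Θ`; consequently there is a unique `Y_Θ ∈ a_Θ` with `⟨α, Y_Θ⟩ = 1`
for all `α ∈ Θ`. -/
theorem proj_simple_roots_basis_aTheta_and_existsUnique_YTheta
    (S Δ Θ : Finset E) (c : E → E → ℤ)
    (hS : IsRootSystem S) (hΔ : IsBase S Δ c) (hΘ : Θ ⊆ Δ) (hne : Θ.Nonempty) :
    LinearIndependent ℝ
      (fun a : Θ => ((Submodule.orthogonalProjectionOnto (aTheta Δ Θ) (a : E)) : E)) ∧
    Submodule.span ℝ
      ((fun a : E => ((Submodule.orthogonalProjectionOnto (aTheta Δ Θ) a : E))) '' (Θ : Set E))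
      = aTheta Δ Θ ∧
    ∃! Y : E, Y ∈ aTheta Δ Θ ∧ ∀ α ∈ Θ, ⟪α, Y⟫ = 1 := by
  classical
  have hKeq : aTheta Δ Θ = (Submodule.span ℝ ((Δ : Set E) \ (Θ : Set E)))ᗮ :=
    aTheta_eq Δ Θ
  have hΘΔ : (Θ : Set E) ⊆ (Δ : Set E) := Finset.coe_subset.2 hΘ
  -- Δ spans E
  have hspanΔ : Submodule.span ℝ (Δ : Set E) = ⊤ := by
    rw [← top_le_iff, ← hS.span_top]
    refine Submodule.span_le.2 fun β hβ => ?_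
    rw [hΔ.expand β hβ]
    exact Submodule.sum_mem _ fun a ha =>
      Submodule.smul_mem _ _ (Submodule.subset_span ha)
  have hΔind : LinearIndependent ℝ (fun a : (Δ : Set E) => (a : E)) := hΔ.indep
  -- dimension of E
  have hcardE : Module.finrank ℝ E = Δ.card := by
    have h1 := finrank_span_finset_eq_card (R := ℝ) (s := Δ) hΔ.indep
    rw [hspanΔ, finrank_top] at h1
    exact h1
  -- independence of Δ \ Θ
  have hΔΘind : LinearIndependent ℝ ((↑) : (Δ \ Θ : Finset E) → E) :=
    hΔ.indep.comp (fun a : (Δ \ Θ : Finset E) => ⟨(a : E), (Finset.mem_sdiff.1 a.2).1⟩)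
      (fun a b hab => Subtype.ext (Subtype.mk_eq_mk.1 hab))
  have hsd : ((Δ \ Θ : Finset E) : Set E) = (Δ : Set E) \ (Θ : Set E) :=
    Finset.coe_sdiff _ _
  have hcardΔΘ :
      Module.finrank ℝ (Submodule.span ℝ (((Δ \ Θ : Finset E)) : Set E)) = (Δ \ Θ).card :=
    finrank_span_finset_eq_card hΔΘind
  have hKeq' : aTheta Δ Θ = (Submodule.span ℝ (((Δ \ Θ : Finset E)) : Set E))ᗮ := by
    rw [hKeq, hsd]
  -- dimension of aTheta
  have hfinK : Module.finrank ℝ (aTheta Δ Θ) = Θ.card := by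
    have h2 := Submodule.finrank_add_finrank_orthogonal
      (K := Submodule.span ℝ (((Δ \ Θ : Finset E)) : Set E))
    rw [hcardΔΘ, hcardE, ← hKeq'] at h2
    have hc : (Δ \ Θ).card = Δ.card - Θ.card := Finset.card_sdiff_of_subset hΘ
    have hle : Θ.card ≤ Δ.card := Finset.card_le_card hΘ
    omega
  -- orthogonal complement of aTheta
  have hKperp : (aTheta Δ Θ)ᗮ = Submodule.span ℝ ((Δ : Set E) \ (Θ : Set E)) := by
    rw [hKeq, Submodule.orthogonal_orthogonal]
  -- disjointness of spans
  have hdisj : Disjoint (Submodule.span ℝ (Θ : Set E))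
      (Submodule.span ℝ ((Δ : Set E) \ (Θ : Set E))) := by
    have h := hΔind.disjoint_span_image (s := {a : (Δ : Set E) | (a : E) ∈ Θ})
      (t := {a : (Δ : Set E) | (a : E) ∉ Θ})
      (by rw [Set.disjoint_left]; intro a ha ha'; exact ha' ha)
    have h1 : (fun a : (Δ : Set E) => (a : E)) '' {a | (a : E) ∈ Θ} = (Θ : Set E) := by
      ext x
      constructor
      · rintro ⟨a, ha, rfl⟩; exact ha
      · intro hx; exact ⟨⟨x, hΘΔ hx⟩, hx, rfl⟩
    have h2 : (fun a : (Δ : Set E) => (a : E)) '' {a | (a : E) ∉ Θ}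
        = (Δ : Set E) \ (Θ : Set E) := by
      ext x
      constructor
      · rintro ⟨a, ha, rfl⟩; exact ⟨a.2, ha⟩
      · rintro ⟨hxΔ, hxΘ⟩; exact ⟨⟨x, hxΔ⟩, hxΘ, rfl⟩
    rwa [h1, h2] at h
  -- independence of the Θ family
  have indepΘ : LinearIndependent ℝ (fun a : Θ => (a : E)) :=
    hΔ.indep.comp (fun a : Θ => ⟨(a : E), hΘ a.2⟩)
      (fun a b hab => Subtype.ext (Subtype.mk_eq_mk.1 hab))
  -- projection as a linear map E → E
  let f : E →ₗ[ℝ] E :=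
    (aTheta Δ Θ).subtype ∘ₗ (Submodule.orthogonalProjectionOnto (aTheta Δ Θ)).toLinearMap
  have hkerf : LinearMap.ker f = (aTheta Δ Θ)ᗮ := by
    ext x
    rw [LinearMap.mem_ker]
    show ((Submodule.orthogonalProjectionOnto (aTheta Δ Θ) x : aTheta Δ Θ) : E) = 0 ↔ _
    rw [Submodule.coe_eq_zero, Submodule.orthogonalProjectionOnto_eq_zero_iff]
  have hrange : Set.range (fun a : Θ => (a : E)) = (Θ : Set E) := by
    ext x
    constructor
    · rintro ⟨a, rfl⟩; exact a.2
    · intro hx; exact ⟨⟨x, hx⟩, rfl⟩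
  have hindep : LinearIndependent ℝ
      (fun a : Θ => ((Submodule.orthogonalProjectionOnto (aTheta Δ Θ) (a : E)) : E)) := by
    have hmap := indepΘ.map (f := f)
      (by rw [hkerf, hKperp, hrange]; exact hdisj)
    exact hmap
  refine ⟨hindep, ?_, ?_⟩
  · -- span statement
    apply Submodule.eq_of_le_of_finrank_eq
    · rw [Submodule.span_le]
      rintro x ⟨a, ha, rfl⟩
      exact SetLike.coe_mem _
    · have himg : (fun a : E => ((Submodule.orthogonalProjectionOnto (aTheta Δ Θ) a : aTheta Δ Θ) : E))
          '' (Θ : Set E)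
          = Set.range (fun a : Θ => ((Submodule.orthogonalProjectionOnto (aTheta Δ Θ) (a : E)) : E)) := by
        ext x
        constructor
        · rintro ⟨a, ha, rfl⟩; exact ⟨⟨a, ha⟩, rfl⟩
        · rintro ⟨a, rfl⟩; exact ⟨(a : E), a.2, rfl⟩
      rw [himg, finrank_span_eq_card hindep, Fintype.card_coe, hfinK]
  · -- unique Y
    let φ : aTheta Δ Θ →ₗ[ℝ] (Θ → ℝ) :=
      { toFun := fun Y a => ⟪(a : E), (Y : E)⟫
        map_add' := fun Y Z => by funext a; simp [inner_add_right]
        map_smul' := fun r Y => by funext a; simp [real_inner_smul_right] }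
    have hφinj : Function.Injective φ := by
      rw [← LinearMap.ker_eq_bot, Submodule.eq_bot_iff]
      rintro Y hY
      have hY0 : φ Y = 0 := LinearMap.mem_ker.1 hY
      have h0 : ∀ a ∈ Θ, ⟪(a : E), (Y : E)⟫ = 0 := fun a ha => congrFun hY0 ⟨a, ha⟩
      have h1 : ∀ b ∈ (Δ : Set E) \ (Θ : Set E), ⟪b, (Y : E)⟫ = 0 :=
        mem_aTheta_iff.1 Y.2
      have h2 : (Y : E) ∈ (Submodule.span ℝ (Δ : Set E))ᗮ := by
        rw [mem_orthogonal_span_iff']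
        intro u hu
        by_cases hu' : u ∈ Θ
        · exact h0 u hu'
        · exact h1 u ⟨hu, hu'⟩
      rw [hspanΔ, Submodule.top_orthogonal_eq_bot, Submodule.mem_bot] at h2
      exact Subtype.ext h2
    have hφsurj : Function.Surjective φ :=
      (LinearMap.injective_iff_surjective_of_finrank_eq_finrank
        (by rw [hfinK, Module.finrank_fintype_fun_eq_card, Fintype.card_coe])).1 hφinj
    obtain ⟨Y₀, hY₀⟩ := hφsurj (fun _ => 1)
    refine ⟨(Y₀ : E), ⟨Y₀.2, fun α hα => congrFun hY₀ ⟨α, hα⟩⟩, ?_⟩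
    rintro Y' ⟨hY'K, hY'⟩
    have hφeq : φ ⟨Y', hY'K⟩ = φ Y₀ := by
      rw [hY₀]; funext a; exact hY' (a : E) a.2
    exact congrArg Subtype.val (hφinj hφeq)
end
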